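/- There exist constants a* > 0 and C > 0 such that for all 0 < a < a*, the diameter of Π_a = {u ∈ V : η(u|u_L) - a·η(u|u_R) ≤ 0} satisfies diam(Π_a) ≤ C√a. -/

import Mathlib

/-!
Strict convexity of `η` and compactness of `V` give a uniform lower bound `m > 0` on the Hessian
over `V`, so by Taylor's formula along segments in the convex set `V`,
`η(u|u_L) ≥ (m/2)|u - u_L|²` on `V`. The relative entropy `η(·|u_R)` is continuous, hence bounded
by some `M` on `V`. For `u ∈ Π_a` this gives `(m/2)|u - u_L|² ≤ η(u|u_L) ≤ a η(u|u_R) ≤ a M`, so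
`Π_a` lies in the closed ball of radius `√(2Ma/m)` around `u_L`.
-/

open Set

lemma monotoneOn_Icc_of_hasDerivAt_nonneg {g g' : ℝ → ℝ} {a b : ℝ}
    (hg : ∀ t, HasDerivAt g (g' t) t) (hg' : ∀ t ∈ Ioo a b, 0 ≤ g' t) :
    MonotoneOn g (Icc a b) :=
  monotoneOn_of_deriv_nonneg (convex_Icc a b)
    (fun t _ => (hg t).continuousAt.continuousWithinAt)
    (fun t _ => (hg t).differentiableAt.differentiableWithinAt)
    (fun t ht => (hg t).deriv ▸ hg' t (interior_Icc (a := a) (b := b) ▸ ht))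

lemma add_add_half_le_of_hasDerivAt {f f' f'' : ℝ → ℝ} {m : ℝ}
    (hf : ∀ t, HasDerivAt f (f' t) t) (hf' : ∀ t, HasDerivAt f' (f'' t) t)
    (hm : ∀ t ∈ Icc (0 : ℝ) 1, m ≤ f'' t) :
    f 0 + f' 0 + m / 2 ≤ f 1 := by
  have hslope : MonotoneOn (fun t => f' t - m * t) (Icc 0 1) :=
    monotoneOn_Icc_of_hasDerivAt_nonneg
      (fun t => ((hf' t).sub ((hasDerivAt_id t).const_mul m)).congr_deriv (by simp))
      (fun t ht => sub_nonneg.2 (hm t (Ioo_subset_Icc_self ht)))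
  have hgap : MonotoneOn (fun t => f t - t * f' 0 - m / 2 * t ^ 2) (Icc 0 1) := by
    refine monotoneOn_Icc_of_hasDerivAt_nonneg (g' := fun t => f' t - f' 0 - m * t)
      (fun t => (((hf t).sub ((hasDerivAt_id t).mul_const (f' 0))).sub
        ((hasDerivAt_pow 2 t).const_mul (m / 2))).congr_deriv (by simp; ring)) ?_
    intro t ht
    have := hslope (left_mem_Icc.2 zero_le_one) (Ioo_subset_Icc_self ht) ht.1.le
    simp only [mul_zero, sub_zero] at this
    linarith
  have := hgap (left_mem_Icc.2 zero_le_one) (right_mem_Icc.2 zero_le_one) zero_le_one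
  simp only at this
  linarith

section

variable {E : Type*} [NormedAddCommGroup E] [NormedSpace ℝ E]

noncomputable def relEntropy (η : E → ℝ) (u v : E) : ℝ := η u - η v - fderiv ℝ η v (u - v)

lemma half_le_relEntropy_of_le_fderiv_fderiv {η : E → ℝ} (hη : ContDiff ℝ 2 η) {p d : E} {m : ℝ}
    (hm : ∀ t ∈ Icc (0 : ℝ) 1, m ≤ fderiv ℝ (fderiv ℝ η) (p + t • d) d d) :
    m / 2 ≤ relEntropy η (p + d) p := by
  have hD : Differentiable ℝ η := hη.differentiable (by norm_num)
  have hD2 : Differentiable ℝ (fderiv ℝ η) :=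
    (hη.fderiv_right (m := 1) (by norm_num)).differentiable one_ne_zero
  have hline : ∀ t : ℝ, HasDerivAt (fun s : ℝ => p + s • d) d t := fun t =>
    (((hasDerivAt_id t).smul_const d).const_add p).congr_deriv (one_smul ℝ d)
  have := add_add_half_le_of_hasDerivAt (f := fun t => η (p + t • d))
    (fun t => (hD _).hasFDerivAt.comp_hasDerivAt t (hline t))
    (fun t => (ContinuousLinearMap.apply ℝ ℝ d).hasFDerivAt.comp_hasDerivAt t
      ((hD2 _).hasFDerivAt.comp_hasDerivAt t (hline t))) hm
  simp only [zero_smul, add_zero, one_smul] at this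
  rw [relEntropy, add_sub_cancel_left]
  linarith

lemma continuous_relEntropy_left {η : E → ℝ} (hη : Continuous η) (v : E) :
    Continuous (relEntropy η · v) := by
  unfold relEntropy
  fun_prop

lemma exists_pos_mul_sq_le_of_isCompact [ProperSpace E] {X : Type*} [TopologicalSpace X]
    {K : Set X} (hK : IsCompact K) {Q : X → E →L[ℝ] E →L[ℝ] ℝ} (hQ : Continuous Q)
    (hpos : ∀ v ∈ K, ∀ x : E, x ≠ 0 → 0 < Q v x x) :
    ∃ m > 0, ∀ v ∈ K, ∀ d : E, m * ‖d‖ ^ 2 ≤ Q v d d := by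
  have hcont : Continuous fun p : X × E => Q p.1 p.2 p.2 :=
    ((hQ.comp continuous_fst).clm_apply continuous_snd).clm_apply continuous_snd
  obtain ⟨m, hm, hmin⟩ := (hK.prod (isCompact_sphere (0 : E) 1)).exists_forall_le'
    hcont.continuousOn fun p hp => hpos p.1 hp.1 p.2 (ne_zero_of_mem_unit_sphere ⟨p.2, hp.2⟩)
  refine ⟨m, hm, fun v hv d => ?_⟩
  rcases eq_or_ne d 0 with rfl | hd
  · simp
  have hd' : 0 < ‖d‖ := norm_pos_iff.2 hd
  have hunit : ‖d‖⁻¹ • d ∈ Metric.sphere (0 : E) 1 := by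
    rw [mem_sphere_zero_iff_norm, norm_smul, norm_inv, norm_norm, inv_mul_cancel₀ hd'.ne']
  have := hmin (v, ‖d‖⁻¹ • d) ⟨hv, hunit⟩
  simp only [map_smul, smul_apply, smul_eq_mul] at this
  calc m * ‖d‖ ^ 2 ≤ ‖d‖⁻¹ * (‖d‖⁻¹ * Q v d d) * ‖d‖ ^ 2 := by gcongr
    _ = Q v d d := by field_simp

lemma mul_sq_le_relEntropy_of_convex {η : E → ℝ} (hη : ContDiff ℝ 2 η) {V : Set E}
    (hV : Convex ℝ V) {m : ℝ} (hm : ∀ v ∈ V, ∀ d : E, m * ‖d‖ ^ 2 ≤ fderiv ℝ (fderiv ℝ η) v d d)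
    {u v : E} (hu : u ∈ V) (hv : v ∈ V) :
    m / 2 * ‖u - v‖ ^ 2 ≤ relEntropy η u v := by
  have := half_le_relEntropy_of_le_fderiv_fderiv hη (p := v) (d := u - v) (m := m * ‖u - v‖ ^ 2)
    fun t ht => hm _ (hV.add_smul_sub_mem hv hu ht) _
  rw [add_sub_cancel] at this
  linarith

end

theorem stmt_3_general (n : ℕ) (V : Set (EuclideanSpace ℝ (Fin n)))
    (hVcomp : IsCompact V) (hVconv : Convex ℝ V)
    (η : EuclideanSpace ℝ (Fin n) → ℝ) (hη : ContDiff ℝ 2 η)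
    (hHess : ∀ v ∈ V, ∀ x : EuclideanSpace ℝ (Fin n), x ≠ 0 →
      0 < fderiv ℝ (fun w => fderiv ℝ η w x) v x)
    (uL uR : EuclideanSpace ℝ (Fin n)) (hL : uL ∈ V) :
    ∃ astar C : ℝ, 0 < astar ∧ 0 < C ∧ ∀ a : ℝ, 0 < a → a < astar →
      Metric.diam {u ∈ V |
        (η u - η uL - fderiv ℝ η uL (u - uL))
          - a * (η u - η uR - fderiv ℝ η uR (u - uR)) ≤ 0}
        ≤ C * Real.sqrt a := by
  have hD2 : ContDiff ℝ 1 (fderiv ℝ η) := hη.fderiv_right (m := 1) (by norm_num)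
  have hHess' : ∀ v ∈ V, ∀ x, x ≠ 0 → 0 < fderiv ℝ (fderiv ℝ η) v x x := fun v hv x hx => by
    simpa [fderiv_clm_apply (hD2.differentiable one_ne_zero v) (differentiableAt_const x)]
      using hHess v hv x hx
  obtain ⟨m, hm, hmV⟩ :=
    exists_pos_mul_sq_le_of_isCompact hVcomp (hD2.continuous_fderiv one_ne_zero) hHess'
  obtain ⟨M, hM⟩ := hVcomp.bddAbove_image (continuous_relEntropy_left hη.continuous uR).continuousOn
  set K := max M 1
  refine ⟨1, 2 * √(2 * K / m), one_pos, by positivity, fun a ha _ => ?_⟩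
  rw [mul_assoc, ← Real.sqrt_mul (by positivity)]
  refine Metric.diam_le_of_subset_closedBall (x := uL) (Real.sqrt_nonneg _) ?_
  rintro u ⟨hu, hle : relEntropy η u uL - a * relEntropy η u uR ≤ 0⟩
  have hsc := mul_sq_le_relEntropy_of_convex hη hVconv hmV hu hL
  have hR : relEntropy η u uR ≤ K := (hM ⟨u, hu, rfl⟩).trans (le_max_left _ _)
  rw [Metric.mem_closedBall, dist_eq_norm]
  refine Real.le_sqrt_of_sq_le ?_
  rw [div_mul_eq_mul_div, le_div_iff₀ hm]
  nlinarith [mul_le_mul_of_nonneg_left hR ha.le]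

/-- Asymptotics of Π_a: there are a*, C > 0 with diam(Π_a) ≤ C √a for all 0 < a < a*. -/
theorem stmt_3 (n : ℕ) (V : Set (EuclideanSpace ℝ (Fin n)))
    (hVcomp : IsCompact V) (hVconv : Convex ℝ V)
    (η : EuclideanSpace ℝ (Fin n) → ℝ) (hη : ContDiff ℝ 2 η)
    (hHess : ∀ v ∈ V, ∀ x : EuclideanSpace ℝ (Fin n), x ≠ 0 →
      0 < fderiv ℝ (fun w => fderiv ℝ η w x) v x)
    (uL uR : EuclideanSpace ℝ (Fin n)) (hL : uL ∈ V) (hR : uR ∈ V) (hLR : uL ≠ uR) :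
    ∃ astar C : ℝ, 0 < astar ∧ 0 < C ∧ ∀ a : ℝ, 0 < a → a < astar →
      Metric.diam {u ∈ V |
        (η u - η uL - fderiv ℝ η uL (u - uL))
          - a * (η u - η uR - fderiv ℝ η uR (u - uR)) ≤ 0}
        ≤ C * Real.sqrt a :=
  stmt_3_general n V hVcomp hVconv η hη hHess uL uR hL
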